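/- arXiv:quant-ph/0504203 — 7 statements merged into one kernel-verified Lean document; each statement's English description precedes it below -/
import Mathlib

section
/- Let d ≥ 2 and let T be a (d·d)×(d·d) complex matrix admitting a finite decomposition T = Σ_i c_i (M_i ⊗ N_i), where each c_i ≥ 0 is real and each M_i and N_i is a rank-one projection on ℂ^d. If ⟨φ⁰, T φ⁰⟩ = 1, then Tr T ≥ d. -/
open Matrix
open scoped Matrix Kronecker

noncomputable section

/-- The maximally entangled state on `ℂ^d ⊗ ℂ^d`. -/
def maxEnt (d : ℕ) : Fin d × Fin d → ℂ :=
  fun p => if p.1 = p.2 then ((1 / Real.sqrt d : ℝ) : ℂ) else 0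

/-- A rank-one projection on `ℂ^d`. -/
def IsRankOneProj {d : ℕ} (M : Matrix (Fin d) (Fin d) ℂ) : Prop :=
  Mᴴ = M ∧ M * M = M ∧ M.trace = 1

/-- trace of A * Aᴴ has nonneg real part -/
lemma trace_mul_conjTranspose_re_nonneg {d : ℕ} (A : Matrix (Fin d) (Fin d) ℂ) :
    0 ≤ (A * Aᴴ).trace.re := by
  rw [Matrix.trace]
  simp only [Matrix.diag, Matrix.mul_apply, Matrix.conjTranspose_apply]
  rw [Complex.re_sum]
  apply Finset.sum_nonneg
  intro i _
  rw [Complex.re_sum]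
  apply Finset.sum_nonneg
  intro j _
  rw [show star (A i j) = (starRingEnd ℂ) (A i j) from rfl, Complex.mul_conj]
  rw [Complex.ofReal_re]; exact Complex.normSq_nonneg _

lemma key_le_one {d : ℕ} {M P : Matrix (Fin d) (Fin d) ℂ}
    (hM : IsRankOneProj M) (hP : IsRankOneProj P) :
    (M * P).trace.re ≤ 1 := by
  obtain ⟨hM1, hM2, hM3⟩ := hM
  obtain ⟨hP1, hP2, hP3⟩ := hP
  have h1 : (1 - P) * (1 - P) = 1 - P := by
    rw [mul_sub, sub_mul, sub_mul, hP2, one_mul, mul_one, one_mul]; abel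
  have hA := trace_mul_conjTranspose_re_nonneg (M * (1 - P))
  have h2 : (M * (1 - P)) * (M * (1 - P))ᴴ = M * (1 - P) * M := by
    rw [Matrix.conjTranspose_mul, Matrix.conjTranspose_sub, Matrix.conjTranspose_one,
      hP1, hM1]
    rw [Matrix.mul_assoc, ← Matrix.mul_assoc (1 - P), h1, ← Matrix.mul_assoc]
  have h3 : (M * (1 - P) * M).trace = 1 - (M * P).trace := by
    rw [Matrix.trace_mul_comm, ← Matrix.mul_assoc, hM2, mul_sub, mul_one,
      Matrix.trace_sub, hM3]
  rw [h2, h3] at hA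
  simp only [Complex.sub_re, Complex.one_re] at hA
  linarith

lemma isRankOneProj_transpose {d : ℕ} {N : Matrix (Fin d) (Fin d) ℂ}
    (hN : IsRankOneProj N) : IsRankOneProj Nᵀ := by
  obtain ⟨h1, h2, h3⟩ := hN
  refine ⟨?_, ?_, ?_⟩
  · ext i j
    simp only [Matrix.conjTranspose_apply, Matrix.transpose_apply]
    exact congrFun (congrFun h1 j) i
  · rw [← Matrix.transpose_mul, h2]
  · rw [Matrix.trace_transpose, h3]

lemma inner_kron {d : ℕ} (M N : Matrix (Fin d) (Fin d) ℂ) :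
    star (maxEnt d) ⬝ᵥ (M ⊗ₖ N).mulVec (maxEnt d) =
      (1 / d : ℂ) * (M * Nᵀ).trace := by
  have hc : ((1 / Real.sqrt d : ℝ) : ℂ) * ((1 / Real.sqrt d : ℝ) : ℂ) = (1 / d : ℂ) := by
    rw [← Complex.ofReal_mul,
      show (1 / Real.sqrt d) * (1 / Real.sqrt d) = 1 / (d : ℝ) by
        rw [div_mul_div_comm, one_mul, Real.mul_self_sqrt (Nat.cast_nonneg d)]]
    push_cast; ring
  have htr : (M * Nᵀ).trace = ∑ i : Fin d, ∑ k : Fin d, M i k * N i k := by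
    rw [Matrix.trace]
    simp [Matrix.diag, Matrix.mul_apply, Matrix.transpose_apply]
  rw [htr, dotProduct]
  simp only [Pi.star_apply, maxEnt, Matrix.mulVec, dotProduct,
    Matrix.kroneckerMap_apply, Complex.star_def, apply_ite (starRingEnd ℂ), map_zero,
    Complex.conj_ofReal]
  rw [Fintype.sum_prod_type]
  simp only [Fintype.sum_prod_type, mul_ite, mul_zero, ite_mul, zero_mul,
    Finset.sum_ite_eq, Finset.sum_ite_eq', Finset.mem_univ, if_true]
  rw [Finset.mul_sum]
  congr 1
  ext i
  rw [Finset.mul_sum, Finset.mul_sum]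
  congr 1
  ext k
  rw [← hc]
  ring

/-- If a (d·d)×(d·d) matrix `T` is a nonnegative combination of Kronecker products
of rank-one projections and `⟨φ⁰, T φ⁰⟩ = 1`, then `Tr T ≥ d`. -/
theorem stmt0 (d : ℕ) (hd : 2 ≤ d)
    (T : Matrix (Fin d × Fin d) (Fin d × Fin d) ℂ)
    (n : ℕ) (c : Fin n → ℝ) (M N : Fin n → Matrix (Fin d) (Fin d) ℂ)
    (hc : ∀ i, 0 ≤ c i)
    (hM : ∀ i, IsRankOneProj (M i))
    (hN : ∀ i, IsRankOneProj (N i))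
    (hT : T = ∑ i, (c i : ℂ) • (M i ⊗ₖ N i))
    (hφ : star (maxEnt d) ⬝ᵥ T.mulVec (maxEnt d) = 1) :
    (d : ℝ) ≤ T.trace.re := by
  have hd0 : (0 : ℝ) < d := by positivity
  -- rewrite the inner product
  rw [hT] at hφ
  have hsum : star (maxEnt d) ⬝ᵥ (∑ i, (c i : ℂ) • (M i ⊗ₖ N i)).mulVec (maxEnt d)
      = ∑ i, (c i : ℂ) * ((1 / d : ℂ) * (M i * (N i)ᵀ).trace) := by
    let L : Matrix (Fin d × Fin d) (Fin d × Fin d) ℂ →+ ℂ :=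
      { toFun := fun A => star (maxEnt d) ⬝ᵥ A.mulVec (maxEnt d)
        map_zero' := by simp [Matrix.zero_mulVec]
        map_add' := fun A B => by simp [Matrix.add_mulVec, dotProduct_add] }
    have : star (maxEnt d) ⬝ᵥ (∑ i, (c i : ℂ) • (M i ⊗ₖ N i)).mulVec (maxEnt d)
        = ∑ i, (c i : ℂ) * (star (maxEnt d) ⬝ᵥ (M i ⊗ₖ N i).mulVec (maxEnt d)) := by
      have := map_sum L (fun i => (c i : ℂ) • (M i ⊗ₖ N i)) Finset.univ
      simp only [L, AddMonoidHom.coe_mk, ZeroHom.coe_mk] at this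
      rw [this]
      refine Finset.sum_congr rfl fun i _ => ?_
      rw [Matrix.smul_mulVec, dotProduct_smul, smul_eq_mul]
    rw [this]
    refine Finset.sum_congr rfl fun i _ => ?_
    rw [inner_kron]
  rw [hsum] at hφ
  have hφ' := hφ
  -- take real parts
  have hre : ∑ i, (c i / d) * ((M i * (N i)ᵀ).trace.re) = 1 := by
    have := congrArg Complex.re hφ'
    rw [Complex.re_sum, Complex.one_re] at this
    rw [← this]
    refine Finset.sum_congr rfl fun i _ => ?_
    rw [show (c i : ℂ) * ((1 / d : ℂ) * (M i * (N i)ᵀ).trace)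
        = ((c i / d : ℝ) : ℂ) * (M i * (N i)ᵀ).trace by push_cast; ring]
    rw [Complex.re_ofReal_mul]
  -- bound
  have hbound : (1 : ℝ) ≤ ∑ i, c i / d := by
    rw [← hre]
    refine Finset.sum_le_sum fun i _ => ?_
    have h1 := key_le_one (hM i) (isRankOneProj_transpose (hN i))
    have h2 : 0 ≤ c i / d := div_nonneg (hc i) hd0.le
    nlinarith
  -- trace
  have htr : T.trace.re = ∑ i, c i := by
    rw [hT, Matrix.trace_sum, Complex.re_sum]
    refine Finset.sum_congr rfl fun i _ => ?_
    rw [Matrix.trace_smul, Matrix.trace_kronecker, (hM i).2.2, (hN i).2.2]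
    simp
  rw [htr]
  have h4 := mul_le_mul_of_nonneg_left hbound hd0.le
  rw [mul_one, Finset.mul_sum] at h4
  calc (d : ℝ) ≤ ∑ i, d * (c i / d) := h4
    _ = ∑ i, c i := Finset.sum_congr rfl fun i _ => by field_simp
end
end

section
/- Let d ≥ 2 and let b be a real number. Suppose T₀ = P + b·(I − P) admits a finite decomposition T₀ = Σ_i c_i (M_i ⊗ N_i) with each c_i ≥ 0 real and each M_i, N_i a rank-one projection on ℂ^d. Then b ≥ 1/(d+1); consequently, for every density matrix σ on ℂ^d ⊗ ℂ^d with θ = ⟨φ⁰, σ φ⁰⟩, one has Tr(σ·T₀) ≥ (d·θ + 1)/(d + 1), and the test T₀ᵘ = P + (1/(d+1))·(I − P) attains equality: Tr(σ·T₀ᵘ) = (d·θ + 1)/(d + 1). -/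
/-!
The partial transpose `A ⊗ B ↦ A ⊗ Bᵀ` maps every nonnegative combination of products of
positive semidefinite matrices to a positive semidefinite matrix, while it maps `P` to `F / d`,
where `F` is the swap operator `x ⊗ y ↦ y ⊗ x`. On an antisymmetric vector `ψ` (one exists as
soon as `d ≥ 2`) `F` acts as `-1`, so the partial transpose of `P + b (I - P)` has expectation
`(b - (1 - b) / d) ‖ψ‖²` there, which forces `b ≥ 1 / (d + 1)`. For the trace bound,
`Tr(σ (P + t (I - P))) = θ + t (1 - θ)` with `θ ≤ 1` because `I - P` is a projection.
-/

open Matrix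
open scoped Matrix Kronecker ComplexOrder

noncomputable section

/-- The rank-one projection `P = |φ⁰⟩⟨φ⁰|` onto the maximally entangled state. -/
def projMaxEnt (d : ℕ) : Matrix (Fin d × Fin d) (Fin d × Fin d) ℂ :=
  vecMulVec (maxEnt d) (star (maxEnt d))

namespace Matrix

variable {m n R : Type*}

def partialTranspose [CommSemiring R] :
    Matrix (m × n) (m × n) R →ₗ[R] Matrix (m × n) (m × n) R where
  toFun A := of fun p q => A (p.1, q.2) (q.1, p.2)
  map_add' _ _ := rfl
  map_smul' _ _ := rfl

@[simp]
lemma partialTranspose_apply [CommSemiring R] (A : Matrix (m × n) (m × n) R) (p q : m × n) :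
    partialTranspose A p q = A (p.1, q.2) (q.1, p.2) := rfl

lemma partialTranspose_kronecker [CommSemiring R] (A : Matrix m m R) (B : Matrix n n R) :
    partialTranspose (A ⊗ₖ B) = A ⊗ₖ Bᵀ := by
  ext p q
  simp

lemma partialTranspose_one [CommSemiring R] [DecidableEq m] [DecidableEq n] :
    partialTranspose (1 : Matrix (m × n) (m × n) R) = 1 := by
  ext ⟨i, j⟩ ⟨k, l⟩
  simp [one_apply, eq_comm]

variable [Fintype m] [Fintype n] {𝕜 : Type*} [RCLike 𝕜]

lemma posSemidef_partialTranspose_sum_smul_kronecker {ι : Type*} [Fintype ι]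
    (c : ι → ℝ) (A : ι → Matrix m m 𝕜) (B : ι → Matrix n n 𝕜) (hc : ∀ i, 0 ≤ c i)
    (hA : ∀ i, (A i).PosSemidef) (hB : ∀ i, (B i).PosSemidef) :
    (partialTranspose (∑ i, (c i : 𝕜) • (A i ⊗ₖ B i))).PosSemidef := by
  simp only [map_sum, map_smul, partialTranspose_kronecker]
  exact posSemidef_sum _ fun i _ =>
    ((hA i).kronecker (hB i).transpose).smul (RCLike.ofReal_nonneg.mpr (hc i))

lemma _root_.IsStarProjection.posSemidef {Q : Matrix n n 𝕜} (hQ : IsStarProjection Q) :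
    Q.PosSemidef := by
  have hQ' : Q = Qᴴ * Q := by
    rw [← star_eq_conjTranspose, hQ.isSelfAdjoint.star_eq, hQ.isIdempotentElem.eq]
  rw [hQ']
  exact posSemidef_conjTranspose_mul_self Q

lemma PosSemidef.trace_mul_nonneg_of_isStarProjection {σ Q : Matrix n n 𝕜}
    (hσ : σ.PosSemidef) (hQ : IsStarProjection Q) : 0 ≤ (σ * Q).trace := by
  have h : σ * Q = σ * Qᴴ * Q := by
    rw [← star_eq_conjTranspose, hQ.isSelfAdjoint.star_eq, Matrix.mul_assoc,
      hQ.isIdempotentElem.eq]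
  rw [h, trace_mul_cycle]
  exact (hσ.mul_mul_conjTranspose_same Q).trace_nonneg

lemma trace_mul_vecMulVec_star (σ : Matrix n n 𝕜) (u : n → 𝕜) :
    (σ * vecMulVec u (star u)).trace = star u ⬝ᵥ σ *ᵥ u := by
  rw [mul_vecMulVec, trace_vecMulVec, dotProduct_comm]

lemma trace_mul_add_smul_one_sub [DecidableEq n] [CommRing R] (σ P : Matrix n n R) (t : R) :
    (σ * (P + t • (1 - P))).trace = (σ * P).trace + t * (σ.trace - (σ * P).trace) := by
  rw [mul_add, Matrix.mul_smul, mul_sub, mul_one, trace_add, trace_smul, trace_sub, smul_eq_mul]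

end Matrix

lemma maxEnt_mul_star_maxEnt (d : ℕ) (p q : Fin d × Fin d) :
    maxEnt d p * star (maxEnt d q) = if p.1 = p.2 ∧ q.1 = q.2 then (d : ℂ)⁻¹ else 0 := by
  have hsq : ((√(d : ℝ) : ℝ) : ℂ)⁻¹ * ((√(d : ℝ) : ℝ) : ℂ)⁻¹ = (d : ℂ)⁻¹ := by
    rw [← mul_inv, ← Complex.ofReal_mul, Real.mul_self_sqrt d.cast_nonneg, Complex.ofReal_natCast]
  by_cases hp : p.1 = p.2 <;> by_cases hq : q.1 = q.2 <;>
    simp [maxEnt, hp, hq, Complex.conj_ofReal, hsq]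

lemma star_maxEnt_dotProduct_maxEnt {d : ℕ} (hd : d ≠ 0) : star (maxEnt d) ⬝ᵥ maxEnt d = 1 := by
  simp only [dotProduct, Pi.star_apply, fun p => mul_comm (star (maxEnt d p)),
    maxEnt_mul_star_maxEnt, and_self, Fintype.sum_prod_type]
  simp [hd]

lemma isStarProjection_projMaxEnt {d : ℕ} (hd : d ≠ 0) : IsStarProjection (projMaxEnt d) where
  isIdempotentElem := by
    rw [IsIdempotentElem, projMaxEnt, vecMulVec_mul_vecMulVec, star_maxEnt_dotProduct_maxEnt hd,
      one_smul]
  isSelfAdjoint := by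
    rw [IsSelfAdjoint, star_eq_conjTranspose, projMaxEnt, conjTranspose_vecMulVec, star_star]

lemma partialTranspose_projMaxEnt (d : ℕ) :
    partialTranspose (projMaxEnt d) =
      (d : ℂ)⁻¹ • Equiv.Perm.permMatrix ℂ (Equiv.prodComm (Fin d) (Fin d)) := by
  ext ⟨i, j⟩ ⟨k, l⟩
  simp only [partialTranspose_apply, projMaxEnt, vecMulVec_apply, Pi.star_apply,
    maxEnt_mul_star_maxEnt]
  simp [PEquiv.toMatrix_apply, and_comm, eq_comm]

lemma exists_ne_zero_comp_swap_eq_neg (n : Type*) [DecidableEq n] [Nontrivial n] :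
    ∃ ψ : n × n → ℂ, ψ ≠ 0 ∧ ψ ∘ Prod.swap = -ψ := by
  obtain ⟨i, j, hij⟩ := exists_pair_ne n
  refine ⟨Pi.single (i, j) 1 - Pi.single (j, i) 1, fun h => ?_, ?_⟩
  · simpa [hij] using congrFun h (i, j)
  · ext ⟨k, l⟩
    simp [Pi.single_apply, and_comm]

lemma star_dotProduct_partialTranspose_mulVec_of_comp_swap_eq_neg {d : ℕ} (b : ℝ)
    {ψ : Fin d × Fin d → ℂ} (hψ : ψ ∘ Prod.swap = -ψ) :
    star ψ ⬝ᵥ partialTranspose (projMaxEnt d + (b : ℂ) • (1 - projMaxEnt d)) *ᵥ ψ =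
      ((b - (1 - b) / d : ℝ) : ℂ) * (star ψ ⬝ᵥ ψ) := by
  have hswap : Equiv.Perm.permMatrix ℂ (Equiv.prodComm (Fin d) (Fin d)) *ᵥ ψ = -ψ := by
    rw [permMatrix_mulVec]
    exact hψ
  rw [map_add, map_smul, map_sub, partialTranspose_one, partialTranspose_projMaxEnt]
  simp only [add_mulVec, sub_mulVec, smul_mulVec, one_mulVec, hswap, dotProduct_add,
    dotProduct_sub, dotProduct_smul, dotProduct_neg, smul_eq_mul]
  push_cast
  ring

lemma one_div_le_of_posSemidef_partialTranspose {d : ℕ} (hd : 2 ≤ d) {b : ℝ}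
    (h : (partialTranspose (projMaxEnt d + (b : ℂ) • (1 - projMaxEnt d))).PosSemidef) :
    1 / (d + 1 : ℝ) ≤ b := by
  have : Nontrivial (Fin d) := Fin.nontrivial_iff_two_le.mpr hd
  obtain ⟨ψ, hψ0, hψ⟩ := exists_ne_zero_comp_swap_eq_neg (Fin d)
  have hform := h.dotProduct_mulVec_nonneg ψ
  rw [star_dotProduct_partialTranspose_mulVec_of_comp_swap_eq_neg b hψ] at hform
  have hcoeff : 0 ≤ b - (1 - b) / d := by
    have hre := (Complex.nonneg_iff.mp hform).1
    rw [Complex.re_ofReal_mul] at hre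
    exact nonneg_of_mul_nonneg_left hre
      (Complex.pos_iff.mp (dotProduct_star_self_pos_iff.mpr hψ0)).1
  have hd0 : (0 : ℝ) < d := by positivity
  rw [div_le_iff₀ (by positivity)]
  rw [sub_nonneg, div_le_iff₀ hd0] at hcoeff
  linarith

lemma IsRankOneProj.isStarProjection {d : ℕ} {M : Matrix (Fin d) (Fin d) ℂ}
    (hM : IsRankOneProj M) : IsStarProjection M :=
  ⟨hM.2.1, hM.1⟩

/-- If `T₀ = P + b (I - P)` is a nonnegative combination of Kronecker products of
rank-one projections, then `b ≥ 1/(d+1)`; consequently, for every density matrix `σ`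
with `θ = ⟨φ⁰, σ φ⁰⟩`, one has `Tr(σ T₀) ≥ (dθ+1)/(d+1)`, and the test
`T₀ᵘ = P + (1/(d+1)) (I - P)` attains this bound. -/
theorem stmt2 (d : ℕ) (hd : 2 ≤ d) (b : ℝ)
    (n : ℕ) (c : Fin n → ℝ) (M N : Fin n → Matrix (Fin d) (Fin d) ℂ)
    (hc : ∀ i, 0 ≤ c i)
    (hM : ∀ i, IsRankOneProj (M i))
    (hN : ∀ i, IsRankOneProj (N i))
    (hT : projMaxEnt d + (b : ℂ) • (1 - projMaxEnt d) = ∑ i, (c i : ℂ) • (M i ⊗ₖ N i)) :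
    1 / (d + 1 : ℝ) ≤ b ∧
    ∀ (σ : Matrix (Fin d × Fin d) (Fin d × Fin d) ℂ), σ.PosSemidef → σ.trace = 1 →
      ∀ θ : ℝ, (θ : ℂ) = star (maxEnt d) ⬝ᵥ σ.mulVec (maxEnt d) →
        ((d : ℝ) * θ + 1) / (d + 1 : ℝ) ≤
            (σ * (projMaxEnt d + (b : ℂ) • (1 - projMaxEnt d))).trace.re ∧
        (σ * (projMaxEnt d + ((1 / (d + 1 : ℝ) : ℝ) : ℂ) • (1 - projMaxEnt d))).trace =
          ((((d : ℝ) * θ + 1) / (d + 1 : ℝ) : ℝ) : ℂ) := by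
  have hb : 1 / (d + 1 : ℝ) ≤ b := by
    refine one_div_le_of_posSemidef_partialTranspose hd (hT ▸ ?_)
    exact posSemidef_partialTranspose_sum_smul_kronecker c M N hc
      (fun i => (hM i).isStarProjection.posSemidef) (fun i => (hN i).isStarProjection.posSemidef)
  refine ⟨hb, fun σ hσ hσ1 θ hθ => ?_⟩
  have hσP : (σ * projMaxEnt d).trace = θ := by
    rw [projMaxEnt, trace_mul_vecMulVec_star, hθ]
  have htest (t : ℝ) :
      (σ * (projMaxEnt d + (t : ℂ) • (1 - projMaxEnt d))).trace = ((θ + t * (1 - θ) : ℝ) : ℂ) := by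
    rw [trace_mul_add_smul_one_sub, hσP, hσ1]
    push_cast
    ring
  have hθ1 : θ ≤ 1 := by
    have h := hσ.trace_mul_nonneg_of_isStarProjection
      (isStarProjection_projMaxEnt (by omega)).one_sub
    rw [mul_sub, mul_one, trace_sub, hσ1, hσP, ← Complex.ofReal_one, ← Complex.ofReal_sub,
      Complex.zero_le_real] at h
    linarith
  have hmix : ((d : ℝ) * θ + 1) / (d + 1) = θ + 1 / (d + 1) * (1 - θ) := by
    field_simp
    ring
  refine ⟨?_, by rw [htest, hmix]⟩
  rw [htest, Complex.ofReal_re, hmix]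
  gcongr
end
end

section
/- Let σ be a density matrix on ℂ² ⊗ ℂ² and set x_{jk} = ⟨φʲ, σ φᵏ⟩ for 0 ≤ j,k ≤ 3. Let T₀ⱽ = (1/10)·K₅⁺ + (1/3)·L₃⁺ + L₁⁺ + (1/6)·K₃⁻ + (1/3)·L₃⁻. Then the type 2 error probability satisfies Tr((σ ⊗ σ)·T₀ⱽ) = vᵀ·Z·v − (2/15)·((Re x₁₂)² + (Re x₂₃)² + (Re x₃₁)²), where v is the real column vector (x₁₁ − 1/2, x₂₂ − 1/2, x₃₃ − 1/2)ᵀ and Z = (1/15)·[[6,7,7],[7,6,7],[7,7,6]]. -/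
open Matrix
open scoped Matrix Kronecker ComplexOrder

noncomputable section

/-- Index type of `ℂ² ⊗ ℂ²`. -/
abbrev Q : Type := Fin 2 × Fin 2

/-- The standard basis vector `|ab⟩` of `ℂ² ⊗ ℂ²`. -/
def ket (a b : Fin 2) : Q → ℂ := fun p => if p = (a, b) then 1 else 0

/-- The Bell basis `φ⁰, φ¹, φ², φ³` of `ℂ² ⊗ ℂ²`. -/
def bell : Fin 4 → Q → ℂ
  | 0 => fun p => (ket 0 0 p + ket 1 1 p) / (Real.sqrt 2 : ℂ)
  | 1 => fun p => Complex.I * (ket 0 1 p + ket 1 0 p) / (Real.sqrt 2 : ℂ)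
  | 2 => fun p => (-ket 0 1 p + ket 1 0 p) / (Real.sqrt 2 : ℂ)
  | 3 => fun p => Complex.I * (ket 0 0 p - ket 1 1 p) / (Real.sqrt 2 : ℂ)

/-- The product basis `e^{jk} = φʲ ⊗ φᵏ` of `(ℂ²⊗ℂ²)⊗(ℂ²⊗ℂ²)`. -/
def e (j k : Fin 4) : Q × Q → ℂ := fun pq => bell j pq.1 * bell k pq.2

/-- Rank-one operator `|v⟩⟨v|`. -/
def outer {m : Type*} (v : m → ℂ) : Matrix m m ℂ := vecMulVec v (star v)

/-- Orthogonal projection onto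
`span{e^{jk}+e^{kj} : 1≤j<k≤3} ∪ {e^{11}−e^{22}, e^{22}−e^{33}}`. -/
def K5 : Matrix (Q × Q) (Q × Q) ℂ :=
  (1 / 2 : ℂ) • (outer (e 1 2 + e 2 1) + outer (e 2 3 + e 3 2) + outer (e 3 1 + e 1 3)) +
    (1 / 2 : ℂ) • outer (e 1 1 - e 2 2) +
    (1 / 6 : ℂ) • outer (e 1 1 + e 2 2 - (2 : ℂ) • e 3 3)

/-- Orthogonal projection onto `span{e^{11}+e^{22}+e^{33}}`. -/
def K1 : Matrix (Q × Q) (Q × Q) ℂ :=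
  (1 / 3 : ℂ) • outer (e 1 1 + e 2 2 + e 3 3)

/-- Orthogonal projection onto `span{e^{jk}−e^{kj} : 1≤j<k≤3}`. -/
def K3m : Matrix (Q × Q) (Q × Q) ℂ :=
  (1 / 2 : ℂ) • (outer (e 1 2 - e 2 1) + outer (e 2 3 - e 3 2) + outer (e 3 1 - e 1 3))

/-- Orthogonal projection onto `span{e^{00}}`. -/
def L1 : Matrix (Q × Q) (Q × Q) ℂ := outer (e 0 0)

/-- Orthogonal projection onto `span{e^{0j}+e^{j0} : j=1,2,3}`. -/
def L3p : Matrix (Q × Q) (Q × Q) ℂ :=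
  (1 / 2 : ℂ) • (outer (e 0 1 + e 1 0) + outer (e 0 2 + e 2 0) + outer (e 0 3 + e 3 0))

/-- Orthogonal projection onto `span{e^{0j}−e^{j0} : j=1,2,3}`. -/
def L3m : Matrix (Q × Q) (Q × Q) ℂ :=
  (1 / 2 : ℂ) • (outer (e 0 1 - e 1 0) + outer (e 0 2 - e 2 0) + outer (e 0 3 - e 3 0))

/-- The matrix elements `x_{jk} = ⟨φʲ, σ φᵏ⟩` of a state `σ` in the Bell basis. -/
def x (σ : Matrix Q Q ℂ) (j k : Fin 4) : ℂ := star (bell j) ⬝ᵥ σ.mulVec (bell k)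

lemma trace_outer' {m : Type*} [Fintype m] [DecidableEq m] (A : Matrix m m ℂ) (u : m → ℂ) :
    (A * outer u).trace = star u ⬝ᵥ A.mulVec u := by
  simp only [outer, trace, diag, mul_apply, vecMulVec_apply, dotProduct, mulVec,
    Pi.star_apply, Finset.mul_sum, Finset.sum_mul]
  refine Finset.sum_congr rfl fun i _ => Finset.sum_congr rfl fun j _ => ?_
  ring

lemma dot_kron' (σ τ : Matrix Q Q ℂ) (u v u' v' : Q → ℂ) :
    star (fun pq : Q × Q => u pq.1 * v pq.2) ⬝ᵥ
        (σ ⊗ₖ τ).mulVec (fun pq : Q × Q => u' pq.1 * v' pq.2)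
      = (star u ⬝ᵥ σ.mulVec u') * (star v ⬝ᵥ τ.mulVec v') := by
  simp only [dotProduct, mulVec, kroneckerMap_apply, Pi.star_apply, star_mul']
  rw [Fintype.sum_prod_type, Finset.sum_mul_sum]
  refine Finset.sum_congr rfl fun p _ => Finset.sum_congr rfl fun q _ => ?_
  rw [Fintype.sum_prod_type]
  rw [show (star (u p) * ∑ p', σ p p' * u' p') * (star (v q) * ∑ q', τ q q' * v' q')
      = star (u p) * star (v q) * ((∑ p', σ p p' * u' p') * ∑ q', τ q q' * v' q') by ring,
    Finset.sum_mul_sum]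
  congr 1
  refine Finset.sum_congr rfl fun p' _ => Finset.sum_congr rfl fun q' _ => ?_
  ring

lemma kron_e' (σ : Matrix Q Q ℂ) (j k j' k' : Fin 4) :
    star (e j k) ⬝ᵥ (σ ⊗ₖ σ).mulVec (e j' k') = x σ j j' * x σ k k' :=
  dot_kron' σ σ (bell j) (bell k) (bell j') (bell k')

lemma x_conj' (σ : Matrix Q Q ℂ) (hherm : σᴴ = σ) (j k : Fin 4) :
    x σ k j = star (x σ j k) := by
  have hs : ∀ p q : Q, star (σ p q) = σ q p := by
    intro p q
    conv_rhs => rw [← hherm]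
    simp [conjTranspose_apply]
  simp only [x, dotProduct, mulVec, Pi.star_apply, star_sum, star_mul', star_star,
    Finset.mul_sum]
  rw [Finset.sum_comm]
  refine Finset.sum_congr rfl fun p _ => Finset.sum_congr rfl fun q _ => ?_
  rw [hs]; ring

lemma bell_complete' (p q : Q) :
    (∑ j : Fin 4, star (bell j p) * bell j q) = if p = q then 1 else 0 := by
  have h2 : ((Real.sqrt 2 : ℝ) : ℂ) * ((Real.sqrt 2 : ℝ) : ℂ) = 2 := by
    norm_cast; exact Real.mul_self_sqrt (by norm_num)
  have hi : ((Real.sqrt 2 : ℝ) : ℂ)⁻¹ ^ 2 = 1 / 2 := by rw [inv_pow, sq, h2]; norm_num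
  fin_cases p <;> fin_cases q <;>
    · simp only [bell, ket, Fin.sum_univ_four, Fin.isValue]
      norm_num [map_div₀, Complex.conj_I, Complex.conj_ofReal, div_mul_div_comm, h2, hi,
        Prod.ext_iff]
      try (ring_nf; simp [hi]; try norm_num)

lemma x_diag_sum' (σ : Matrix Q Q ℂ) : ∑ j : Fin 4, x σ j j = σ.trace := by
  simp only [x, dotProduct, mulVec, Pi.star_apply, Finset.mul_sum]
  rw [Finset.sum_comm]
  have key : ∀ p : Q, (∑ j : Fin 4, ∑ q : Q, star (bell j p) * (σ p q * bell j q))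
      = σ p p := by
    intro p
    rw [Finset.sum_comm]
    have h1 : ∀ q : Q, (∑ j : Fin 4, star (bell j p) * (σ p q * bell j q))
        = σ p q * if p = q then 1 else 0 := by
      intro q
      rw [← bell_complete' p q, Finset.mul_sum]
      exact Finset.sum_congr rfl fun j _ => by ring
    simp only [h1, mul_ite, mul_one, mul_zero, Finset.sum_ite_eq, Finset.mem_univ, if_true]
  simp only [key, trace, diag]

/-- The type 2 error probability of the test `T₀ⱽ`:
`Tr((σ⊗σ) T₀ⱽ) = vᵀZv − (2/15)((Re x₁₂)² + (Re x₂₃)² + (Re x₃₁)²)`. -/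
theorem stmt7 (σ : Matrix Q Q ℂ) (hσ : σ.PosSemidef) (htr : σ.trace = 1)
    (T0V : Matrix (Q × Q) (Q × Q) ℂ)
    (hT0V : T0V = (1 / 10 : ℂ) • K5 + (1 / 3 : ℂ) • L3p + L1 +
      (1 / 6 : ℂ) • K3m + (1 / 3 : ℂ) • L3m)
    (v : Fin 3 → ℝ)
    (hv : v = ![(x σ 1 1).re - 1 / 2, (x σ 2 2).re - 1 / 2, (x σ 3 3).re - 1 / 2])
    (Z : Matrix (Fin 3) (Fin 3) ℝ)
    (hZ : Z = (1 / 15 : ℝ) • !![6, 7, 7; 7, 6, 7; 7, 7, 6]) :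
    ((σ ⊗ₖ σ) * T0V).trace =
      ((v ⬝ᵥ Z.mulVec v -
        (2 / 15) * ((x σ 1 2).re ^ 2 + (x σ 2 3).re ^ 2 + (x σ 3 1).re ^ 2) : ℝ) : ℂ) := by
  subst hT0V hv hZ
  have hherm := hσ.1
  have hx := x_conj' σ hherm
  have hdr : ∀ j : Fin 4, ((x σ j j).re : ℂ) = x σ j j := fun j =>
    Complex.conj_eq_iff_re.mp (hx j j).symm
  have hsum : x σ 0 0 = 1 - x σ 1 1 - x σ 2 2 - x σ 3 3 := by
    have h := x_diag_sum' σ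
    rw [Fin.sum_univ_four, htr] at h
    linear_combination h
  -- expand the left-hand side
  rw [K5, L3p, L1, K3m, L3m]
  simp only [Matrix.mul_add, Matrix.mul_smul, trace_add, trace_smul, trace_outer',
    smul_eq_mul]
  simp only [star_add, star_sub, star_smul, mulVec_add, mulVec_sub, mulVec_smul,
    dotProduct_add, add_dotProduct, dotProduct_sub, sub_dotProduct, dotProduct_smul,
    smul_dotProduct, kron_e', smul_eq_mul, star_ofNat]
  -- expand the right-hand side
  simp only [Matrix.mulVec, dotProduct, Fin.sum_univ_three, Matrix.smul_apply,
    Matrix.cons_val', Matrix.cons_val_zero, Matrix.cons_val_one, Matrix.head_cons,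
    Matrix.empty_val', Matrix.cons_val_fin_one, Matrix.head_fin_const, smul_eq_mul,
    Matrix.of_apply, Matrix.cons_val_two, Matrix.tail_cons]
  push_cast
  -- normalize star-forms and eliminate dependent entries
  rw [hx 1 2, hx 2 3, hx 3 1, hx 0 1, hx 0 2, hx 0 3, hsum]
  rw [← hdr 1, ← hdr 2, ← hdr 3]
  have hre : ∀ z : ℂ, ((z.re : ℝ) : ℂ) = (z + (starRingEnd ℂ) z) / 2 := by
    intro z
    rw [Complex.add_conj]
    push_cast; ring
  rw [hre (x σ 1 2), hre (x σ 2 3), hre (x σ 3 1)]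
  simp only [Complex.star_def, Complex.ofReal_re]
  ring
end
end

section
/- For every density matrix σ on ℂ² ⊗ ℂ², with x_{jk} = ⟨φʲ, σ φᵏ⟩, one has Tr((σ ⊗ σ)·K₃⁻) = Σ_{1≤j<k≤3} x_{jj}·x_{kk} − Σ_{1≤j<k≤3} |x_{jk}|². -/
open Matrix
open scoped Matrix Kronecker ComplexOrder

noncomputable section

/-!
In the Bell product basis `σ ⊗ σ` has matrix elements `⟨e^{jk}, (σ⊗σ) e^{lm}⟩ = x_{jl} x_{km}`, so
each rank-one summand `|e^{jk} − e^{kj}⟩⟨e^{jk} − e^{kj}|` of `2 K₃⁻` contributes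
`2 (x_{jj} x_{kk} − x_{jk} x_{kj})`, and hermiticity of `σ` turns `x_{jk} x_{kj}` into `|x_{jk}|²`.
-/

section General

variable {R : Type*} [CommRing R] {m n : Type*} [Fintype m] [Fintype n]

lemma trace_mul_outer (A : Matrix m m ℂ) (v : m → ℂ) :
    (A * outer v).trace = star v ⬝ᵥ A *ᵥ v := by
  rw [outer, mul_vecMulVec, trace_vecMulVec, dotProduct_comm]

lemma kronecker_mulVec_mul (A : Matrix m m R) (B : Matrix n n R) (u : m → R) (v : n → R) :
    (A ⊗ₖ B) *ᵥ (fun q => u q.1 * v q.2) = fun q => (A *ᵥ u) q.1 * (B *ᵥ v) q.2 := by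
  funext q
  simp only [mulVec, dotProduct, Fintype.sum_prod_type, Finset.sum_mul_sum, kroneckerMap_apply]
  exact Finset.sum_congr rfl fun _ _ => Finset.sum_congr rfl fun _ _ => by ring

lemma dotProduct_mul_mul (u u' : m → R) (v v' : n → R) :
    (fun q : m × n => u q.1 * v q.2) ⬝ᵥ (fun q => u' q.1 * v' q.2) = (u ⬝ᵥ u') * (v ⬝ᵥ v') := by
  simp only [dotProduct, Fintype.sum_prod_type, Finset.sum_mul_sum]
  exact Finset.sum_congr rfl fun _ _ => Finset.sum_congr rfl fun _ _ => by ring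

variable [StarRing R]

lemma star_dotProduct_kronecker_mulVec_mul (A : Matrix m m R) (B : Matrix n n R)
    (u u' : m → R) (v v' : n → R) :
    star (fun q : m × n => u q.1 * v q.2) ⬝ᵥ (A ⊗ₖ B) *ᵥ (fun q => u' q.1 * v' q.2) =
      (star u ⬝ᵥ A *ᵥ u') * (star v ⬝ᵥ B *ᵥ v') := by
  rw [kronecker_mulVec_mul, ← dotProduct_mul_mul]
  congr 1
  funext q
  exact star_mul' (u q.1) (v q.2)

lemma Matrix.IsHermitian.star_dotProduct_mulVec_swap {A : Matrix m m R} (hA : A.IsHermitian)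
    (u v : m → R) : star v ⬝ᵥ A *ᵥ u = star (star u ⬝ᵥ A *ᵥ v) := by
  rw [← star_dotProduct, star_mulVec, hA.eq, dotProduct_mulVec]

end General

lemma x_swap_of_isHermitian {σ : Matrix Q Q ℂ} (hσ : σ.IsHermitian) (j k : Fin 4) :
    x σ k j = starRingEnd ℂ (x σ j k) :=
  hσ.star_dotProduct_mulVec_swap (bell j) (bell k)

lemma star_e_dotProduct_kronecker_mulVec_e (σ : Matrix Q Q ℂ) (j k l m : Fin 4) :
    star (e j k) ⬝ᵥ (σ ⊗ₖ σ) *ᵥ e l m = x σ j l * x σ k m :=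
  star_dotProduct_kronecker_mulVec_mul σ σ (bell j) (bell l) (bell k) (bell m)

lemma trace_kronecker_mul_outer_antisymm (σ : Matrix Q Q ℂ) (j k : Fin 4) :
    ((σ ⊗ₖ σ) * outer (e j k - e k j)).trace = 2 * (x σ j j * x σ k k - x σ j k * x σ k j) := by
  simp only [trace_mul_outer, star_sub, mulVec_sub, sub_dotProduct, dotProduct_sub,
    star_e_dotProduct_kronecker_mulVec_e]
  ring

theorem stmt9_general (σ : Matrix Q Q ℂ) (hσ : σ.PosSemidef) :
    ((σ ⊗ₖ σ) * K3m).trace =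
      (x σ 1 1 * x σ 2 2 + x σ 1 1 * x σ 3 3 + x σ 2 2 * x σ 3 3) -
      (((‖x σ 1 2‖ : ℂ)) ^ 2 + ((‖x σ 1 3‖ : ℂ)) ^ 2 + ((‖x σ 2 3‖ : ℂ)) ^ 2) := by
  have norm_sq (j k : Fin 4) : ((‖x σ j k‖ : ℂ)) ^ 2 = x σ j k * x σ k j := by
    rw [x_swap_of_isHermitian hσ.isHermitian j k, Complex.mul_conj']
  rw [K3m, Matrix.mul_smul, trace_smul, mul_add, mul_add, trace_add, trace_add,
    trace_kronecker_mul_outer_antisymm, trace_kronecker_mul_outer_antisymm,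
    trace_kronecker_mul_outer_antisymm, norm_sq 1 2, norm_sq 1 3, norm_sq 2 3, smul_eq_mul]
  ring

/-- `Tr((σ⊗σ) K₃⁻) = Σ_{j<k} x_{jj} x_{kk} − Σ_{j<k} |x_{jk}|²`. -/
theorem stmt9 (σ : Matrix Q Q ℂ) (hσ : σ.PosSemidef) (htr : σ.trace = 1) :
    ((σ ⊗ₖ σ) * K3m).trace =
      (x σ 1 1 * x σ 2 2 + x σ 1 1 * x σ 3 3 + x σ 2 2 * x σ 3 3) -
      (((‖x σ 1 2‖ : ℂ)) ^ 2 + ((‖x σ 1 3‖ : ℂ)) ^ 2 + ((‖x σ 2 3‖ : ℂ)) ^ 2) :=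
  stmt9_general σ hσ
end
end

section
/- For every density matrix σ on ℂ² ⊗ ℂ², with x_{jk} = ⟨φʲ, σ φᵏ⟩, one has Tr((σ ⊗ σ)·L₃⁻) = Σ_{j=1}^{3} (x₀₀·x_{jj} − |x₀ⱼ|²). -/
open Matrix
open scoped Matrix Kronecker ComplexOrder

noncomputable section

/-!
`L₃⁻` is half the sum of the rank-one operators `|φ⁰⊗φʲ − φʲ⊗φ⁰⟩⟨φ⁰⊗φʲ − φʲ⊗φ⁰|`. Against
`σ ⊗ σ` the expectation of a product vector factorises, so each of them contributes the Gram
determinant `2 (x₀₀ xⱼⱼ − x₀ⱼ xⱼ₀)`, and hermiticity of `σ` gives `x₀ⱼ xⱼ₀ = |x₀ⱼ|²`.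
-/

namespace Matrix

variable {R m n : Type*}

def kroneckerVec [Mul R] (a : m → R) (b : n → R) : m × n → R := fun pq => a pq.1 * b pq.2

theorem star_kroneckerVec [CommSemiring R] [StarRing R] (a : m → R) (b : n → R) :
    star (kroneckerVec a b) = kroneckerVec (star a) (star b) :=
  funext fun _ => star_mul' _ _

variable [Fintype m] [Fintype n]

section CommSemiring

variable [CommSemiring R]

theorem kronecker_mulVec_kroneckerVec (A : Matrix m m R) (B : Matrix n n R) (a : m → R)
    (b : n → R) : (A ⊗ₖ B) *ᵥ kroneckerVec a b = kroneckerVec (A *ᵥ a) (B *ᵥ b) := by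
  ext ⟨p, q⟩
  simp only [kroneckerVec, mulVec, dotProduct, kroneckerMap_apply, Fintype.sum_prod_type,
    Finset.sum_mul_sum]
  exact Finset.sum_congr rfl fun _ _ => Finset.sum_congr rfl fun _ _ => by ring

theorem kroneckerVec_dotProduct_kroneckerVec (a c : m → R) (b d : n → R) :
    kroneckerVec a b ⬝ᵥ kroneckerVec c d = (a ⬝ᵥ c) * (b ⬝ᵥ d) := by
  simp only [kroneckerVec, dotProduct, Fintype.sum_prod_type, Finset.sum_mul_sum]
  exact Finset.sum_congr rfl fun _ _ => Finset.sum_congr rfl fun _ _ => by ring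

theorem star_kroneckerVec_dotProduct_kronecker_mulVec [StarRing R] (A : Matrix m m R)
    (B : Matrix n n R) (a c : m → R) (b d : n → R) :
    star (kroneckerVec a b) ⬝ᵥ (A ⊗ₖ B) *ᵥ kroneckerVec c d
      = (star a ⬝ᵥ A *ᵥ c) * (star b ⬝ᵥ B *ᵥ d) := by
  rw [star_kroneckerVec, kronecker_mulVec_kroneckerVec, kroneckerVec_dotProduct_kroneckerVec]

end CommSemiring

theorem trace_mul_outer [DecidableEq m] (M : Matrix m m ℂ) (v : m → ℂ) :
    (M * outer v).trace = star v ⬝ᵥ M *ᵥ v := by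
  rw [outer, mul_vecMulVec, trace_vecMulVec, dotProduct_comm]

theorem trace_kronecker_mul_outer_antisymm [DecidableEq n] (ρ : Matrix n n ℂ) (a b : n → ℂ) :
    ((ρ ⊗ₖ ρ) * outer (kroneckerVec a b - kroneckerVec b a)).trace
      = 2 * ((star a ⬝ᵥ ρ *ᵥ a) * (star b ⬝ᵥ ρ *ᵥ b)
          - (star a ⬝ᵥ ρ *ᵥ b) * (star b ⬝ᵥ ρ *ᵥ a)) := by
  rw [trace_mul_outer, star_sub, mulVec_sub, sub_dotProduct, dotProduct_sub, dotProduct_sub]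
  simp only [star_kroneckerVec_dotProduct_kronecker_mulVec]
  ring

theorem IsHermitian.star_dotProduct_mulVec_mul_swap {A : Matrix n n ℂ} (hA : A.IsHermitian)
    (v w : n → ℂ) :
    (star v ⬝ᵥ A *ᵥ w) * (star w ⬝ᵥ A *ᵥ v) = (‖star v ⬝ᵥ A *ᵥ w‖ : ℂ) ^ 2 := by
  have hswap : star w ⬝ᵥ A *ᵥ v = star (star v ⬝ᵥ A *ᵥ w) := by
    rw [star_dotProduct, star_mulVec, hA.eq, ← dotProduct_mulVec]
  rw [hswap, Complex.star_def, Complex.mul_conj']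

end Matrix

theorem stmt11_general (σ : Matrix Q Q ℂ) (hσ : σ.PosSemidef) :
    ((σ ⊗ₖ σ) * L3m).trace =
      (x σ 0 0 * x σ 1 1 - ((‖x σ 0 1‖ : ℂ)) ^ 2) +
      (x σ 0 0 * x σ 2 2 - ((‖x σ 0 2‖ : ℂ)) ^ 2) +
      (x σ 0 0 * x σ 3 3 - ((‖x σ 0 3‖ : ℂ)) ^ 2) := by
  have hterm (j : Fin 4) : ((σ ⊗ₖ σ) * outer (e 0 j - e j 0)).trace
      = 2 * (x σ 0 0 * x σ j j - (‖x σ 0 j‖ : ℂ) ^ 2) := by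
    rw [show x σ 0 j = star (bell 0) ⬝ᵥ σ *ᵥ bell j from rfl,
      ← hσ.isHermitian.star_dotProduct_mulVec_mul_swap]
    exact trace_kronecker_mul_outer_antisymm σ (bell 0) (bell j)
  rw [L3m, Matrix.mul_smul, trace_smul, Matrix.mul_add, Matrix.mul_add, trace_add, trace_add,
    hterm 1, hterm 2, hterm 3, smul_eq_mul]
  ring

/-- `Tr((σ⊗σ) L₃⁻) = Σ_{j=1}^3 (x₀₀ x_{jj} − |x₀ⱼ|²)`. -/
theorem stmt11 (σ : Matrix Q Q ℂ) (hσ : σ.PosSemidef) (htr : σ.trace = 1) :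
    ((σ ⊗ₖ σ) * L3m).trace =
      (x σ 0 0 * x σ 1 1 - ((‖x σ 0 1‖ : ℂ)) ^ 2) +
      (x σ 0 0 * x σ 2 2 - ((‖x σ 0 2‖ : ℂ)) ^ 2) +
      (x σ 0 0 * x σ 3 3 - ((‖x σ 0 3‖ : ℂ)) ^ 2) :=
  stmt11_general σ hσ
end
end

section
/- Let w₁, …, w₅ be real numbers and T₁ = w₁·K₅⁺ + w₂·L₃⁺ + w₃·K₁⁺ + w₄·K₃⁻ + w₅·L₃⁻. If the partial transpose of T₁ over the second-sample factors A₂ ⊗ B₂ is positive semidefinite, then w₂ = w₅. -/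
open Matrix
open scoped Matrix Kronecker ComplexOrder

noncomputable section

-- An element of `Q × Q = (A₁ × B₁) × (A₂ × B₂)` is the quadruple of indices
-- `((a₁,b₁),(a₂,b₂))` of `(ℂ²)^{⊗4} = A₁ ⊗ B₁ ⊗ A₂ ⊗ B₂`;
-- the first sample is `A₁ ⊗ B₁` and the second sample is `A₂ ⊗ B₂`.

/-- Partial transpose over the second sample `A₂ ⊗ B₂`. -/
def ptSecond (X : Matrix (Q × Q) (Q × Q) ℂ) : Matrix (Q × Q) (Q × Q) ℂ :=
  Matrix.of fun r c => X (r.1, c.2) (c.1, r.2)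

/-- Partial transpose over the factors `B₁ ⊗ B₂`. -/
def ptB (X : Matrix (Q × Q) (Q × Q) ℂ) : Matrix (Q × Q) (Q × Q) ℂ :=
  Matrix.of fun r c =>
    X ((r.1.1, c.1.2), (r.2.1, c.2.2)) ((c.1.1, r.1.2), (c.2.1, r.2.2))

/-- Partial transpose over the single factor `B₂`. -/
def ptB2 (X : Matrix (Q × Q) (Q × Q) ℂ) : Matrix (Q × Q) (Q × Q) ℂ :=
  Matrix.of fun r c => X (r.1, (r.2.1, c.2.2)) (c.1, (c.2.1, r.2.2))

/-! A positive semidefinite matrix annihilates every vector on which its quadratic form vanishes.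
For product vectors whose second-sample factors are real, the partial transpose satisfies
`⟨a ⊗ b, ptSecond X (f ⊗ g)⟩ = ⟨a ⊗ g, X (f ⊗ b)⟩`. Since `T₁` has no component along `e⁰⁰`,
the quadratic form of `ptSecond T₁` vanishes at `e⁰⁰`, so `ptSecond T₁ e⁰⁰ = 0`; on the other hand
`⟨e²², ptSecond T₁ e⁰⁰⟩ = ⟨e²⁰, T₁ e⁰²⟩ = (w₂ − w₅)/2`, the two `L₃` projections contributing
with opposite signs. -/

lemma star_prod_dotProduct {R m n : Type*} [CommSemiring R] [StarRing R] [Fintype m] [Fintype n]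
    (a c : m → R) (b d : n → R) :
    star (fun p : m × n => a p.1 * b p.2) ⬝ᵥ (fun p => c p.1 * d p.2) =
      (star a ⬝ᵥ c) * (star b ⬝ᵥ d) := by
  simp only [dotProduct, Fintype.sum_prod_type, Finset.sum_mul_sum, Pi.star_apply, star_mul']
  refine Finset.sum_congr rfl fun _ _ => Finset.sum_congr rfl fun _ _ => by ring

lemma outer_mulVec {m : Type*} [Fintype m] (v w : m → ℂ) : outer v *ᵥ w = (star v ⬝ᵥ w) • v := by
  ext i
  simp [outer, vecMulVec_mulVec, mul_comm]

lemma bell_dotProduct_bell (j k : Fin 4) :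
    star (bell j) ⬝ᵥ bell k = if j = k then 1 else 0 := by
  have h : (Real.sqrt 2 : ℂ) ^ 2 = 2 := by
    rw [← Complex.ofReal_pow, Real.sq_sqrt zero_le_two]; norm_num
  fin_cases j <;> fin_cases k <;>
    simp [dotProduct, bell, ket, Fintype.sum_prod_type, Complex.conj_ofReal] <;>
    field_simp <;> norm_num [h, Complex.I_sq]

lemma star_bell_zero : star (bell 0) = bell 0 := by
  ext p; simp [bell, ket, Complex.conj_ofReal]

lemma star_bell_two : star (bell 2) = bell 2 := by
  ext p; simp [bell, ket, Complex.conj_ofReal]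

lemma star_prod_dotProduct_ptSecond_mulVec (X : Matrix (Q × Q) (Q × Q) ℂ) (a b f g : Q → ℂ) :
    star (fun p : Q × Q => a p.1 * b p.2) ⬝ᵥ ptSecond X *ᵥ (fun p => f p.1 * g p.2) =
      star (fun p : Q × Q => a p.1 * star g p.2) ⬝ᵥ X *ᵥ (fun p => f p.1 * star b p.2) := by
  simp only [dotProduct, mulVec, ptSecond, of_apply, Fintype.sum_prod_type (α₁ := Q) (α₂ := Q),
    Finset.mul_sum, Pi.star_apply, star_mul', star_star]
  refine Finset.sum_congr rfl fun r₁ _ => ?_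
  rw [Finset.sum_comm]
  conv_rhs => rw [Finset.sum_comm]
  refine Finset.sum_congr rfl fun c₁ _ => ?_
  rw [Finset.sum_comm]
  exact Finset.sum_congr rfl fun _ _ => Finset.sum_congr rfl fun _ _ => by ring

lemma e_dotProduct_e (j k j' k' : Fin 4) :
    star (e j k) ⬝ᵥ e j' k' = if j = j' ∧ k = k' then 1 else 0 := by
  unfold e
  rw [star_prod_dotProduct, bell_dotProduct_bell, bell_dotProduct_bell]
  split_ifs <;> simp_all

lemma e_dotProduct_ptSecond_mulVec_e (X : Matrix (Q × Q) (Q × Q) ℂ) {j k j' k' : Fin 4}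
    (hk : star (bell k) = bell k) (hk' : star (bell k') = bell k') :
    star (e j k) ⬝ᵥ ptSecond X *ᵥ e j' k' = star (e j k') ⬝ᵥ X *ᵥ e j' k := by
  have h := star_prod_dotProduct_ptSecond_mulVec X (bell j) (bell k) (bell j') (bell k')
  rwa [hk, hk'] at h

lemma combination_mulVec_e00 (w1 w2 w3 w4 w5 : ℂ) :
    (w1 • K5 + w2 • L3p + w3 • K1 + w4 • K3m + w5 • L3m) *ᵥ e 0 0 = 0 := by
  simp [K5, L3p, K1, K3m, L3m, add_mulVec, smul_mulVec, outer_mulVec, star_add, star_sub,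
    add_dotProduct, sub_dotProduct, e_dotProduct_e]

lemma e20_dotProduct_combination_mulVec_e02 (w1 w2 w3 w4 w5 : ℂ) :
    star (e 2 0) ⬝ᵥ (w1 • K5 + w2 • L3p + w3 • K1 + w4 • K3m + w5 • L3m) *ᵥ e 0 2 =
      (w2 - w5) / 2 := by
  simp [K5, L3p, K1, K3m, L3m, add_mulVec, smul_mulVec, outer_mulVec, star_add, star_sub,
    add_dotProduct, sub_dotProduct, dotProduct_add, dotProduct_sub, e_dotProduct_e]
  ring

/-- If the partial transpose of `T₁ = w₁K₅⁺ + w₂L₃⁺ + w₃K₁⁺ + w₄K₃⁻ + w₅L₃⁻`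
over the second sample `A₂ ⊗ B₂` is positive semidefinite, then `w₂ = w₅`. -/
theorem stmt17 (w1 w2 w3 w4 w5 : ℝ)
    (T1 : Matrix (Q × Q) (Q × Q) ℂ)
    (hT1 : T1 = (w1 : ℂ) • K5 + (w2 : ℂ) • L3p + (w3 : ℂ) • K1 +
      (w4 : ℂ) • K3m + (w5 : ℂ) • L3m)
    (hpt : (ptSecond T1).PosSemidef) :
    w2 = w5 := by
  have hkernel : ptSecond T1 *ᵥ e 0 0 = 0 := by
    rw [← hpt.dotProduct_mulVec_zero_iff, e_dotProduct_ptSecond_mulVec_e T1 star_bell_zero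
      star_bell_zero, hT1, combination_mulVec_e00, dotProduct_zero]
  have hcross := e_dotProduct_ptSecond_mulVec_e T1 (j := 2) (j' := 0) star_bell_two star_bell_zero
  rw [hkernel, dotProduct_zero, hT1, e20_dotProduct_combination_mulVec_e02] at hcross
  have hw : (w2 : ℂ) = w5 := by linear_combination -2 * hcross
  exact_mod_cast hw
end
end

section
/- Let w₁, …, w₅ be real numbers and T₁ = w₁·K₅⁺ + w₂·L₃⁺ + w₃·K₁⁺ + w₄·K₃⁻ + w₅·L₃⁻. If both the partial transpose of T₁ over the factors B₁ ⊗ B₂ and the partial transpose of I − T₁ over B₁ ⊗ B₂ are positive semidefinite, then 0 ≤ (10·w₁ + 6·w₂ − w₃)/12 ≤ 1 and 0 ≤ (w₃ + 2·(w₄ + w₅))/4 ≤ 1. -/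
open Matrix
open scoped Matrix Kronecker ComplexOrder

noncomputable section

/-!
If `0 ≤ ptB T₁ ≤ I`, the quadratic form of `ptB T₁` at `|a⟩ − |b⟩`, for standard basis vectors
`a ≠ b`, lies between `0` and `‖|a⟩ − |b⟩‖² = 2`. Since `ptB` moves the `B`-indices between rows
and columns, the choices `|01,01⟩ − |10,10⟩` and `|01,10⟩ − |10,01⟩` pick up from the Bell
projectors exactly twice the two quantities of the theorem.
-/

section QuadraticForm

variable {n R : Type*} [Fintype n] [DecidableEq n] [Ring R] [StarRing R]

lemma single_sub_single_dotProduct_mulVec (M : Matrix n n R) (a b : n) :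
    star (Pi.single a (1 : R) - Pi.single b 1 : n → R) ⬝ᵥ M *ᵥ (Pi.single a 1 - Pi.single b 1) =
      M a a - M a b - M b a + M b b := by
  rw [star_sub, Pi.star_single, Pi.star_single, star_one, mulVec_sub, mulVec_single, mulVec_single]
  simp only [sub_dotProduct, single_dotProduct, Pi.sub_apply, one_mul, MulOpposite.op_one,
    one_smul, col_apply]
  abel

lemma Matrix.PosSemidef.dotProduct_mulVec_mem_Icc [PartialOrder R] [IsOrderedAddMonoid R]
    {M : Matrix n n R} (hM : M.PosSemidef) (hM' : (1 - M).PosSemidef) (v : n → R) :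
    star v ⬝ᵥ M *ᵥ v ∈ Set.Icc 0 (star v ⬝ᵥ v) := by
  refine ⟨hM.dotProduct_mulVec_nonneg v, ?_⟩
  have h := hM'.dotProduct_mulVec_nonneg v
  rwa [sub_mulVec, one_mulVec, dotProduct_sub, sub_nonneg] at h

lemma Matrix.PosSemidef.apply_sub_apply_sub_apply_add_apply_mem_Icc [PartialOrder R]
    [IsOrderedAddMonoid R] {M : Matrix n n R} (hM : M.PosSemidef) (hM' : (1 - M).PosSemidef)
    {a b : n} (hab : a ≠ b) : M a a - M a b - M b a + M b b ∈ Set.Icc 0 2 := by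
  have h := hM.dotProduct_mulVec_mem_Icc hM' (Pi.single a 1 - Pi.single b 1)
  have hnorm := single_sub_single_dotProduct_mulVec (1 : Matrix n n R) a b
  rw [one_mulVec, one_apply_ne hab, one_apply_ne hab.symm, one_apply_eq, one_apply_eq] at hnorm
  rwa [hnorm, single_sub_single_dotProduct_mulVec, sub_zero, sub_zero, one_add_one_eq_two] at h

end QuadraticForm

lemma ptB_one : ptB 1 = 1 := by
  ext ⟨⟨a₁, b₁⟩, a₂, b₂⟩ ⟨⟨a₁', b₁'⟩, a₂', b₂'⟩
  simp only [ptB, of_apply, one_apply, Prod.ext_iff]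
  grind

lemma ptB_one_sub (T : Matrix (Q × Q) (Q × Q) ℂ) : ptB (1 - T) = 1 - ptB T := by
  nth_rw 2 [← ptB_one]
  rfl

lemma ofReal_mem_Icc_zero_two (c : ℝ) : (c : ℂ) ∈ Set.Icc 0 2 ↔ c ∈ Set.Icc 0 2 := by
  rw [Set.mem_Icc, Set.mem_Icc, Complex.zero_le_real, ← Complex.ofReal_ofNat, Complex.real_le_real]

def T₁ (w₁ w₂ w₃ w₄ w₅ : ℝ) : Matrix (Q × Q) (Q × Q) ℂ :=
  (w₁ : ℂ) • K5 + (w₂ : ℂ) • L3p + (w₃ : ℂ) • K1 + (w₄ : ℂ) • K3m + (w₅ : ℂ) • L3m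

-- `√2 • bell`: it keeps square roots out of the entry computations below.
def bellNum : Fin 4 → Q → ℂ
  | 0 => fun p => ket 0 0 p + ket 1 1 p
  | 1 => fun p => Complex.I * (ket 0 1 p + ket 1 0 p)
  | 2 => fun p => -ket 0 1 p + ket 1 0 p
  | 3 => fun p => Complex.I * (ket 0 0 p - ket 1 1 p)

lemma e_apply_eq_bellNum (j k : Fin 4) (pq : Q × Q) :
    e j k pq = bellNum j pq.1 * bellNum k pq.2 / 2 := by
  have hsqrt : ((Real.sqrt 2 : ℝ) : ℂ) * (Real.sqrt 2 : ℝ) = 2 := by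
    norm_cast
    exact Real.mul_self_sqrt zero_le_two
  fin_cases j <;> fin_cases k <;> simp only [e, bell, bellNum, div_mul_div_comm, hsqrt]

lemma ptB_T₁_first (w₁ w₂ w₃ w₄ w₅ : ℝ) :
    let a : Q × Q := ((0, 1), (0, 1))
    let b : Q × Q := ((1, 0), (1, 0))
    let M := ptB (T₁ w₁ w₂ w₃ w₄ w₅)
    M a a - M a b - M b a + M b b = (((10 * w₁ + 6 * w₂ - w₃) / 6 : ℝ) : ℂ) := by
  simp only [ptB, of_apply, T₁, Matrix.add_apply, Matrix.smul_apply, K5, L3p, K1, K3m, L3m, outer,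
    vecMulVec_apply, Pi.star_apply, Pi.add_apply, Pi.sub_apply, Pi.smul_apply, smul_eq_mul,
    e_apply_eq_bellNum]
  norm_num [bellNum, ket, Prod.ext_iff, Fin.ext_iff]
  ring

lemma ptB_T₁_second (w₁ w₂ w₃ w₄ w₅ : ℝ) :
    let a : Q × Q := ((0, 1), (1, 0))
    let b : Q × Q := ((1, 0), (0, 1))
    let M := ptB (T₁ w₁ w₂ w₃ w₄ w₅)
    M a a - M a b - M b a + M b b = (((w₃ + 2 * (w₄ + w₅)) / 2 : ℝ) : ℂ) := by
  simp only [ptB, of_apply, T₁, Matrix.add_apply, Matrix.smul_apply, K5, L3p, K1, K3m, L3m, outer,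
    vecMulVec_apply, Pi.star_apply, Pi.add_apply, Pi.sub_apply, Pi.smul_apply, smul_eq_mul,
    e_apply_eq_bellNum]
  norm_num [bellNum, ket, Prod.ext_iff, Fin.ext_iff]
  linear_combination (-(w₄ : ℂ) - w₅) * Complex.I_sq

/-- If the partial transposes over `B₁ ⊗ B₂` of both `T₁` and `I − T₁`, where
`T₁ = w₁K₅⁺ + w₂L₃⁺ + w₃K₁⁺ + w₄K₃⁻ + w₅L₃⁻`, are positive semidefinite, then
`0 ≤ (10w₁ + 6w₂ − w₃)/12 ≤ 1` and `0 ≤ (w₃ + 2(w₄ + w₅))/4 ≤ 1`. -/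
theorem stmt18 (w1 w2 w3 w4 w5 : ℝ)
    (T1 : Matrix (Q × Q) (Q × Q) ℂ)
    (hT1 : T1 = (w1 : ℂ) • K5 + (w2 : ℂ) • L3p + (w3 : ℂ) • K1 +
      (w4 : ℂ) • K3m + (w5 : ℂ) • L3m)
    (hpt : (ptB T1).PosSemidef) (hpt' : (ptB (1 - T1)).PosSemidef) :
    (0 ≤ (10 * w1 + 6 * w2 - w3) / 12 ∧ (10 * w1 + 6 * w2 - w3) / 12 ≤ 1) ∧
    (0 ≤ (w3 + 2 * (w4 + w5)) / 4 ∧ (w3 + 2 * (w4 + w5)) / 4 ≤ 1) := by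
  change T1 = T₁ w1 w2 w3 w4 w5 at hT1
  subst hT1
  rw [ptB_one_sub] at hpt'
  have h₁ := hpt.apply_sub_apply_sub_apply_add_apply_mem_Icc hpt' (a := ((0, 1), (0, 1)))
    (b := ((1, 0), (1, 0))) (by decide)
  have h₂ := hpt.apply_sub_apply_sub_apply_add_apply_mem_Icc hpt' (a := ((0, 1), (1, 0)))
    (b := ((1, 0), (0, 1))) (by decide)
  rw [ptB_T₁_first, ofReal_mem_Icc_zero_two] at h₁
  rw [ptB_T₁_second, ofReal_mem_Icc_zero_two] at h₂
  constructor <;> constructor <;> linarith [h₁.1, h₁.2, h₂.1, h₂.2]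
end
end
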